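/- arXiv:1803.09243 — 3 statements merged into one kernel-verified Lean document; each statement's English description precedes it below -/
import Mathlib

section
/- Let F = (a, x) be a spike-train signal with d nodes such that |a_i| ≤ 1 and |x_i| ≤ 1 for all i. For 1 ≤ l ≤ d let δ_l(F) denote the maximum of the absolute values of all l × l minors of the d × d Hankel matrix H_d(F) with entries m_{i+j}(F), 0 ≤ i, j ≤ d−1. Then for every signal F̃ with at most l − 1 nodes (with no bound on its amplitudes or nodes), ‖m̄(F) − m̄(F̃)‖ ≥ min( 1, δ_l(F) / (√(2l−1) · l^2 · l! · (d+1)^{l−1}) ), where m̄(G) = (m_0(G),…,m_{2d−2}(G)) ∈ ℝ^{2d−1} and ‖·‖ is the Euclidean norm. -/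
lemma prod_diff_bound {ι : Type*} [DecidableEq ι] (f g : ι → ℝ) (m e : ℝ)
    (hm : 0 ≤ m) (he : 0 ≤ e)
    (hf : ∀ i, |f i| ≤ m) (hg : ∀ i, |g i| ≤ m) (hd : ∀ i, |f i - g i| ≤ e)
    (s : Finset ι) :
    |∏ i ∈ s, f i - ∏ i ∈ s, g i| ≤ s.card * e * m ^ (s.card - 1) := by
  induction s using Finset.induction_on with
  | empty => simp
  | @insert a s hnot ih =>
    rw [Finset.prod_insert hnot, Finset.prod_insert hnot, Finset.card_insert_of_notMem hnot]
    have key : f a * ∏ i ∈ s, f i - g a * ∏ i ∈ s, g i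
        = (f a - g a) * ∏ i ∈ s, f i + g a * (∏ i ∈ s, f i - ∏ i ∈ s, g i) := by ring
    rw [key]
    have hPf : |∏ i ∈ s, f i| ≤ m ^ s.card := by
      rw [Finset.abs_prod]
      calc ∏ i ∈ s, |f i| ≤ ∏ i ∈ s, m :=
            Finset.prod_le_prod (fun i _ => abs_nonneg _) (fun i _ => hf i)
        _ = m ^ s.card := by rw [Finset.prod_const]
    calc |(f a - g a) * ∏ i ∈ s, f i + g a * (∏ i ∈ s, f i - ∏ i ∈ s, g i)|
        ≤ |(f a - g a) * ∏ i ∈ s, f i| + |g a * (∏ i ∈ s, f i - ∏ i ∈ s, g i)| := abs_add_le _ _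
      _ = |f a - g a| * |∏ i ∈ s, f i| + |g a| * |∏ i ∈ s, f i - ∏ i ∈ s, g i| := by
          rw [abs_mul, abs_mul]
      _ ≤ e * m ^ s.card + m * (s.card * e * m ^ (s.card - 1)) := by
          gcongr <;> first | exact hd a | exact hg a
      _ ≤ ((s.card : ℝ) + 1) * e * m ^ ((s.card + 1) - 1) := by
          rcases Nat.eq_zero_or_pos s.card with h0 | hpos
          · simp [h0]
          · have : m * m ^ (s.card - 1) = m ^ s.card := by
              rw [← pow_succ']
              congr 1
              omega
            have hrw : m * ((s.card : ℝ) * e * m ^ (s.card - 1))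
                = (s.card : ℝ) * e * m ^ s.card := by
              rw [← this]; ring
            rw [hrw]
            simp only [Nat.add_sub_cancel]
            nlinarith [pow_nonneg hm s.card, mul_nonneg he (pow_nonneg hm s.card)]
      _ = ((s.card + 1 : ℕ) : ℝ) * e * m ^ ((s.card + 1) - 1) := by push_cast; ring

lemma det_diff_bound (l : ℕ) (A B : Matrix (Fin l) (Fin l) ℝ) (m e : ℝ)
    (hm : 0 ≤ m) (he : 0 ≤ e)
    (hA : ∀ i j, |A i j| ≤ m) (hB : ∀ i j, |B i j| ≤ m)
    (hd : ∀ i j, |A i j - B i j| ≤ e) :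
    |A.det - B.det| ≤ (Nat.factorial l : ℝ) * (l * e * m ^ (l - 1)) := by
  rw [Matrix.det_apply', Matrix.det_apply', ← Finset.sum_sub_distrib]
  calc |∑ σ : Equiv.Perm (Fin l), ((Equiv.Perm.sign σ : ℤ) * ∏ i, A (σ i) i
          - (Equiv.Perm.sign σ : ℤ) * ∏ i, B (σ i) i)|
      ≤ ∑ σ : Equiv.Perm (Fin l), |((Equiv.Perm.sign σ : ℤ) : ℝ) * ∏ i, A (σ i) i
          - ((Equiv.Perm.sign σ : ℤ) : ℝ) * ∏ i, B (σ i) i| :=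
        Finset.abs_sum_le_sum_abs _ _
    _ ≤ ∑ σ : Equiv.Perm (Fin l), (l * e * m ^ (l - 1)) := by
        apply Finset.sum_le_sum
        intro σ _
        rw [← mul_sub, abs_mul]
        have hsign : |((Equiv.Perm.sign σ : ℤ) : ℝ)| = 1 := by
          rcases Int.units_eq_one_or (Equiv.Perm.sign σ) with h | h <;> simp [h]
        rw [hsign, one_mul]
        have := prod_diff_bound (fun i => A (σ i) i) (fun i => B (σ i) i) m e hm he
          (fun i => hA _ _) (fun i => hB _ _) (fun i => hd _ _) Finset.univ
        simpa using this
    _ = (Nat.factorial l : ℝ) * (l * e * m ^ (l - 1)) := by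
        rw [Finset.sum_const, Finset.card_univ, Fintype.card_perm, Fintype.card_fin, nsmul_eq_mul]

lemma det_lowrank_zero (l r : ℕ) (hr : r < l)
    (M : Matrix (Fin l) (Fin l) ℝ)
    (P : Matrix (Fin l) (Fin r) ℝ) (Q : Matrix (Fin r) (Fin l) ℝ)
    (hM : M = P * Q) : M.det = 0 := by
  by_contra h
  have hu : IsUnit M := (Matrix.isUnit_iff_isUnit_det M).2 (isUnit_iff_ne_zero.2 h)
  have h1 : M.rank = l := by simpa using Matrix.rank_of_isUnit M hu
  have h2 : M.rank ≤ r := by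
    rw [hM]
    exact le_trans (Matrix.rank_mul_le_left P Q) ((Matrix.rank_le_card_width P).trans (by simp))
  omega

/-- STATEMENT 13: Let `F = (a, x)` be a spike-train signal with `d` nodes,
`|aᵢ| ≤ 1`, `|xᵢ| ≤ 1`. Let `δ_l(F)` be the maximum absolute value of all
`l × l` minors of the moment Hankel matrix `H_d(F)` (`1 ≤ l ≤ d`). Then for
every signal `F̃` with at most `l - 1` nodes,
`‖m̄(F) - m̄(F̃)‖ ≥ min(1, δ_l(F) / (√(2l-1) · l² · l! · (d+1)^{l-1}))`,
where `m̄(G) = (m₀(G), …, m_{2d-2}(G)) ∈ ℝ^{2d-1}`. -/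
theorem moment_difference_lower_bound
    (d l : ℕ) (hl : 1 ≤ l) (hld : l ≤ d)
    (a x : Fin d → ℝ) (ha : ∀ i, a i ≠ 0) (hx : Function.Injective x)
    (ha1 : ∀ i, |a i| ≤ 1) (hx1 : ∀ i, |x i| ≤ 1)
    (r : ℕ) (hr : r < l) (b y : Fin r → ℝ)
    (hb : ∀ i, b i ≠ 0) (hy : Function.Injective y) :
    Real.sqrt (∑ k ∈ Finset.range (2 * d - 1),
        ((∑ i, a i * x i ^ k) - (∑ j, b j * y j ^ k)) ^ 2) ≥
      min 1
        ((⨆ f : { f : Fin l → Fin d // StrictMono f }, ⨆ g : { g : Fin l → Fin d // StrictMono g },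
            |Matrix.det (Matrix.of fun r' s : Fin l =>
              ∑ i, a i * x i ^ ((f.1 r' : ℕ) + (g.1 s : ℕ)))|) /
          (Real.sqrt (2 * l - 1) * (l : ℝ) ^ 2 * (Nat.factorial l : ℝ)
            * ((d : ℝ) + 1) ^ (l - 1))) := by
  rw [ge_iff_le]
  set ε := Real.sqrt (∑ k ∈ Finset.range (2 * d - 1),
      ((∑ i, a i * x i ^ k) - (∑ j, b j * y j ^ k)) ^ 2) with hε
  have hε0 : 0 ≤ ε := Real.sqrt_nonneg _
  rcases le_total 1 ε with hε1 | hε1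
  · exact le_trans (min_le_left _ _) hε1
  -- main case : ε ≤ 1
  have hd1 : 1 ≤ d := le_trans hl hld
  have hl1 : (1 : ℝ) ≤ (l : ℝ) := by exact_mod_cast hl
  have hdiff : ∀ k, k < 2 * d - 1 →
      |(∑ i, a i * x i ^ k) - (∑ j, b j * y j ^ k)| ≤ ε := by
    intro k hk
    have h1 : ((∑ i, a i * x i ^ k) - (∑ j, b j * y j ^ k)) ^ 2
        ≤ ∑ k ∈ Finset.range (2 * d - 1),
            ((∑ i, a i * x i ^ k) - (∑ j, b j * y j ^ k)) ^ 2 :=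
      Finset.single_le_sum
        (f := fun k => ((∑ i, a i * x i ^ k) - (∑ j, b j * y j ^ k)) ^ 2)
        (fun _ _ => sq_nonneg _) (Finset.mem_range.2 hk)
    rw [← Real.sqrt_sq_eq_abs, hε]
    exact Real.sqrt_le_sqrt h1
  have hmF : ∀ k : ℕ, |∑ i, a i * x i ^ k| ≤ (d : ℝ) := by
    intro k
    calc |∑ i, a i * x i ^ k| ≤ ∑ i, |a i * x i ^ k| := Finset.abs_sum_le_sum_abs _ _
      _ ≤ ∑ _i : Fin d, (1 : ℝ) := by
          apply Finset.sum_le_sum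
          intro i _
          rw [abs_mul, abs_pow]
          have hp : |x i| ^ k ≤ 1 := pow_le_one₀ (abs_nonneg _) (hx1 i)
          nlinarith [ha1 i, abs_nonneg (a i), pow_nonneg (abs_nonneg (x i)) k]
      _ = (d : ℝ) := by simp
  -- bound on each minor
  have hminor : ∀ (f g : { f : Fin l → Fin d // StrictMono f }),
      |Matrix.det (Matrix.of fun r' s : Fin l =>
        ∑ i, a i * x i ^ ((f.1 r' : ℕ) + (g.1 s : ℕ)))|
      ≤ (Nat.factorial l : ℝ) * (l * ε * ((d : ℝ) + 1) ^ (l - 1)) := by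
    intro f g
    set A : Matrix (Fin l) (Fin l) ℝ := Matrix.of fun r' s : Fin l =>
      ∑ i, a i * x i ^ ((f.1 r' : ℕ) + (g.1 s : ℕ)) with hA
    set B : Matrix (Fin l) (Fin l) ℝ := Matrix.of fun r' s : Fin l =>
      ∑ j, b j * y j ^ ((f.1 r' : ℕ) + (g.1 s : ℕ)) with hB
    have hkey : ∀ r' s : Fin l, (f.1 r' : ℕ) + (g.1 s : ℕ) < 2 * d - 1 := by
      intro r' s
      have h1 := (f.1 r').isLt
      have h2 := (g.1 s).isLt
      omega
    have hB0 : B.det = 0 := by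
      apply det_lowrank_zero l r hr B
        (Matrix.of fun r' j => b j * y j ^ (f.1 r' : ℕ))
        (Matrix.of fun j s => y j ^ (g.1 s : ℕ))
      ext r' s
      simp only [Matrix.of_apply, Matrix.mul_apply, hB]
      apply Finset.sum_congr rfl
      intro j _
      rw [pow_add]
      ring
    have hAe : ∀ i j, |A i j| ≤ (d : ℝ) + 1 := by
      intro i j
      exact le_trans (hmF _) (by linarith)
    have hde : ∀ i j, |A i j - B i j| ≤ ε := by
      intro i j
      exact hdiff _ (hkey i j)
    have hBe : ∀ i j, |B i j| ≤ (d : ℝ) + 1 := by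
      intro i j
      have h1 := hde i j
      have h2 : |A i j| ≤ (d : ℝ) := hmF _
      rw [abs_le] at h1 h2 ⊢
      constructor <;> linarith [h1.1, h1.2, h2.1, h2.2]
    have hdet := det_diff_bound l A B ((d : ℝ) + 1) ε (by positivity) hε0 hAe hBe hde
    rw [hB0, sub_zero] at hdet
    exact hdet
  haveI : Nonempty { f : Fin l → Fin d // StrictMono f } :=
    ⟨⟨Fin.castLE hld, Fin.strictMono_castLE hld⟩⟩
  have hC : 0 < Real.sqrt (2 * (l : ℝ) - 1) * (l : ℝ) ^ 2 * (Nat.factorial l : ℝ)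
      * ((d : ℝ) + 1) ^ (l - 1) := by
    have h1 : (0 : ℝ) < Real.sqrt (2 * (l : ℝ) - 1) :=
      Real.sqrt_pos.2 (by linarith)
    have h2 : (0 : ℝ) < (Nat.factorial l : ℝ) := by
      exact_mod_cast Nat.factorial_pos l
    positivity
  refine le_trans (min_le_right _ _) ?_
  rw [div_le_iff₀ hC]
  have hsup : (⨆ f : { f : Fin l → Fin d // StrictMono f },
      ⨆ g : { g : Fin l → Fin d // StrictMono g },
        |Matrix.det (Matrix.of fun r' s : Fin l =>
          ∑ i, a i * x i ^ ((f.1 r' : ℕ) + (g.1 s : ℕ)))|)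
      ≤ (Nat.factorial l : ℝ) * (l * ε * ((d : ℝ) + 1) ^ (l - 1)) :=
    ciSup_le fun f => ciSup_le fun g => hminor f g
  refine le_trans hsup ?_
  have hsq1 : (1 : ℝ) ≤ Real.sqrt (2 * (l : ℝ) - 1) := by
    nlinarith [Real.sq_sqrt (show (0:ℝ) ≤ 2 * (l:ℝ) - 1 by linarith),
      Real.sqrt_nonneg (2 * (l:ℝ) - 1)]
  have hQ : (0 : ℝ) ≤ (Nat.factorial l : ℝ) * ((d : ℝ) + 1) ^ (l - 1) := by positivity
  have h1 : (l : ℝ) ≤ Real.sqrt (2 * (l : ℝ) - 1) * (l : ℝ) ^ 2 := by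
    nlinarith [hsq1, hl1]
  calc (Nat.factorial l : ℝ) * (l * ε * ((d : ℝ) + 1) ^ (l - 1))
      = ε * ((l : ℝ) * ((Nat.factorial l : ℝ) * ((d : ℝ) + 1) ^ (l - 1))) := by ring
    _ ≤ ε * ((Real.sqrt (2 * (l : ℝ) - 1) * (l : ℝ) ^ 2)
          * ((Nat.factorial l : ℝ) * ((d : ℝ) + 1) ^ (l - 1))) :=
        mul_le_mul_of_nonneg_left (mul_le_mul_of_nonneg_right h1 hQ) hε0
    _ = ε * (Real.sqrt (2 * (l : ℝ) - 1) * (l : ℝ) ^ 2 * (Nat.factorial l : ℝ)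
          * ((d : ℝ) + 1) ^ (l - 1)) := by ring
end

section
/- Let F = (a, x) be an (η, γ)-regular spike-train signal with d nodes: x_1 < … < x_d lie in [−1, 1] with x_{j+1} − x_j ≥ η for all j, where 0 < η ≤ 2/(d−1), and the amplitudes satisfy γ ≤ |a_j| ≤ 1 for all j, with 0 < γ ≤ 1. Then |det H_d(F)| ≥ ∏_{i=1}^{d−1} (i!)^2 · η^{d(d−1)} · γ^d, where H_d(F) is the d × d Hankel matrix with (i,j)-entry m_{i+j}(F) for 0 ≤ i, j ≤ d−1. In particular δ_d(F) ≥ ∏_{i=1}^{d−1} (i!)^2 · η^{d(d−1)} · γ^d. -/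
/-- STATEMENT 15: Let `F = (a, x)` be an `(η, γ)`-regular spike-train signal with
`d` nodes: `-1 ≤ x₁ < … < x_d ≤ 1` with consecutive gaps `≥ η`
(`0 < η ≤ 2/(d-1)`), and `γ ≤ |aⱼ| ≤ 1` (`0 < γ ≤ 1`). Then
`|det H_d(F)| ≥ ∏_{i=1}^{d-1}(i!)² · η^{d(d-1)} · γ^d`, where `H_d(F)` is the
`d × d` moment Hankel matrix with `(i,j)`-entry `m_{i+j}(F)`. -/
theorem hankel_det_lower_bound_regular
    (d : ℕ) (hd : 1 ≤ d) (a x : Fin d → ℝ)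
    (hmono : StrictMono x)
    (hrange : ∀ j, x j ∈ Set.Icc (-1 : ℝ) 1)
    (η : ℝ) (hη : 0 < η) (hη' : η ≤ 2 / ((d : ℝ) - 1))
    (hsep : ∀ (j : ℕ) (h : j + 1 < d), x ⟨j + 1, h⟩ - x ⟨j, Nat.lt_of_succ_lt h⟩ ≥ η)
    (γ : ℝ) (hγ : 0 < γ) (hγ1 : γ ≤ 1)
    (hamp : ∀ j, γ ≤ |a j|) (hamp1 : ∀ j, |a j| ≤ 1) :
    |Matrix.det (Matrix.of fun i j : Fin d => ∑ t, a t * x t ^ ((i : ℕ) + (j : ℕ)))| ≥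
      (∏ i ∈ Finset.Icc 1 (d - 1), (Nat.factorial i : ℝ) ^ 2)
        * η ^ (d * (d - 1)) * γ ^ d := by
  -- step 1: separation between nodes
  have key : ∀ (m : ℕ) (i : ℕ) (h : i + m < d),
      (m : ℝ) * η ≤ x ⟨i + m, h⟩ - x ⟨i, by omega⟩ := by
    intro m
    induction m with
    | zero => intro i h; simp
    | succ m ih =>
      intro i h
      have h1 : i + m < d := by omega
      have h2 : i + m + 1 < d := by omega
      have := hsep (i + m) h2
      have := ih i h1
      have hx : x ⟨i + (m + 1), h⟩ = x ⟨i + m + 1, h2⟩ := by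
        congr 1
      push_cast
      rw [hx]
      linarith
  have sep : ∀ i j : Fin d, i < j → (((j : ℕ) - (i : ℕ) : ℕ) : ℝ) * η ≤ x j - x i := by
    intro i j hij
    have hij' : (i : ℕ) < (j : ℕ) := hij
    have h : (i : ℕ) + ((j : ℕ) - (i : ℕ)) < d := by omega
    have := key ((j : ℕ) - (i : ℕ)) i h
    have hxj : (⟨(i : ℕ) + ((j : ℕ) - (i : ℕ)), h⟩ : Fin d) = j := by
      ext; simp; omega
    have hxi : (⟨(i : ℕ), by omega⟩ : Fin d) = i := by ext; simp
    rwa [hxj, hxi] at this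
  -- step 2: matrix factorization
  have hH : (Matrix.of fun i j : Fin d => ∑ t, a t * x t ^ ((i : ℕ) + (j : ℕ)))
      = (Matrix.vandermonde x).transpose * Matrix.diagonal a * Matrix.vandermonde x := by
    ext i j
    rw [Matrix.mul_apply]
    simp only [Matrix.mul_diagonal, Matrix.transpose_apply, Matrix.vandermonde_apply,
      Matrix.of_apply]
    apply Finset.sum_congr rfl
    intro t _
    rw [pow_add]; ring
  rw [hH, Matrix.det_mul, Matrix.det_mul, Matrix.det_transpose, Matrix.det_diagonal,
    Matrix.det_vandermonde]
  set V : ℝ := ∏ i : Fin d, ∏ j ∈ Finset.Ioi i, (x j - x i) with hV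
  have habs : |(V * ∏ i, a i) * V| = V ^ 2 * ∏ i, |a i| := by
    rw [abs_mul, abs_mul, Finset.abs_prod Finset.univ a, ← sq_abs V]
    ring
  rw [habs]
  -- step 3: lower bound V
  set P : ℝ := ∏ i : Fin d, ∏ j ∈ Finset.Ioi i, ((((j : ℕ) - (i : ℕ) : ℕ) : ℝ) * η) with hP
  have hPnn : 0 ≤ P := by
    apply Finset.prod_nonneg; intro i _
    apply Finset.prod_nonneg; intro j hj
    positivity
  have hPV : P ≤ V := by
    apply Finset.prod_le_prod
    · intro i _; apply Finset.prod_nonneg; intro j hj; positivity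
    · intro i _
      apply Finset.prod_le_prod
      · intro j hj; positivity
      · intro j hj
        exact sep i j (Finset.mem_Ioi.mp hj)
  -- step 4: compute P
  have hinnerN : ∀ i : Fin d, ∏ j ∈ Finset.Ioi i, ((j : ℕ) - (i : ℕ))
      = (d - 1 - (i : ℕ)).factorial := by
    intro i
    rw [← Finset.prod_range_add_one_eq_factorial]
    refine Finset.prod_bij' (fun j _ => (j : ℕ) - (i : ℕ) - 1)
      (fun k hk => (⟨(i : ℕ) + k + 1, by
        simp only [Finset.mem_range] at hk; omega⟩ : Fin d)) ?_ ?_ ?_ ?_ ?_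
    · intro j hj
      have hj' : (i : ℕ) < (j : ℕ) := Fin.lt_def.mp (Finset.mem_Ioi.mp hj)
      simp only [Finset.mem_range]
      have := j.isLt
      omega
    · intro k hk
      simp only [Finset.mem_range] at hk
      simp only [Finset.mem_Ioi, Fin.lt_def]
      omega
    · intro j hj
      have hj' : (i : ℕ) < (j : ℕ) := Fin.lt_def.mp (Finset.mem_Ioi.mp hj)
      ext
      simp
      omega
    · intro k hk
      simp only [Finset.mem_range] at hk
      simp
      omega
    · intro j hj
      have hj' : (i : ℕ) < (j : ℕ) := Fin.lt_def.mp (Finset.mem_Ioi.mp hj)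
      show (j : ℕ) - (i : ℕ) = (j : ℕ) - (i : ℕ) - 1 + 1
      omega
  have hinner : ∀ i : Fin d, ∏ j ∈ Finset.Ioi i, ((((j : ℕ) - (i : ℕ) : ℕ) : ℝ) * η)
      = ((d - 1 - (i : ℕ)).factorial : ℝ) * η ^ (d - 1 - (i : ℕ)) := by
    intro i
    rw [Finset.prod_mul_distrib, Finset.prod_const, Fin.card_Ioi, ← Nat.cast_prod, hinnerN]
  have hPval : P = (∏ k ∈ Finset.range d, ((k.factorial : ℝ)))
      * η ^ (∑ k ∈ Finset.range d, k) := by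
    rw [hP, Finset.prod_congr rfl (fun i _ => hinner i), Finset.prod_mul_distrib,
      Finset.prod_pow_eq_pow_sum]
    congr 1
    · rw [Fin.prod_univ_eq_prod_range (fun k => ((d - 1 - k).factorial : ℝ)) d,
        Finset.prod_range_reflect (fun k => ((k.factorial : ℝ))) d]
    · rw [Fin.sum_univ_eq_sum_range (fun k => d - 1 - k) d,
        Finset.sum_range_reflect (fun k => k) d]
  -- step 5: combine
  have hFprod : (∏ k ∈ Finset.range d, ((k.factorial : ℝ))) ^ 2
      = ∏ i ∈ Finset.Icc 1 (d - 1), (Nat.factorial i : ℝ) ^ 2 := by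
    rw [← Finset.prod_pow]
    have hset : Finset.range d = insert 0 (Finset.Icc 1 (d - 1)) := by
      ext k
      simp only [Finset.mem_range, Finset.mem_insert, Finset.mem_Icc]
      omega
    rw [hset, Finset.prod_insert (by simp)]
    simp [Nat.factorial]
  have hexp : (∑ k ∈ Finset.range d, k) * 2 = d * (d - 1) :=
    Finset.sum_range_id_mul_two d
  have hP2 : P ^ 2 = (∏ i ∈ Finset.Icc 1 (d - 1), (Nat.factorial i : ℝ) ^ 2)
      * η ^ (d * (d - 1)) := by
    rw [hPval, mul_pow, ← pow_mul, hexp, hFprod]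
  have hgd : γ ^ d ≤ ∏ i, |a i| := by
    calc γ ^ d = ∏ _i : Fin d, γ := by
          rw [Finset.prod_const, Finset.card_univ, Fintype.card_fin]
      _ ≤ ∏ i, |a i| := Finset.prod_le_prod (fun _ _ => le_of_lt hγ) (fun i _ => hamp i)
  have hV2 : P ^ 2 ≤ V ^ 2 := by
    apply pow_le_pow_left₀ hPnn hPV
  calc (∏ i ∈ Finset.Icc 1 (d - 1), (Nat.factorial i : ℝ) ^ 2) * η ^ (d * (d - 1)) * γ ^ d
      = P ^ 2 * γ ^ d := by rw [hP2]
    _ ≤ V ^ 2 * ∏ i, |a i| := by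
        apply mul_le_mul hV2 hgd (by positivity) (by positivity)
end

section
/- Let F = (a, x) be an (η, γ)-regular spike-train signal with d nodes: x_1 < … < x_d lie in [−1, 1] with x_{j+1} − x_j ≥ η for all j, where 0 < η ≤ 2/(d−1), and γ ≤ |a_j| ≤ 1 for all j, with 0 < γ ≤ 1. Then for every signal F̃ with at most l nodes, l < d, ‖m̄(F) − m̄(F̃)‖ ≥ min( 1, (η^{d(d−1)} γ^d ∏_{i=1}^{d−1} (i!)^2) / (√(2d−1) · d^2 · d! · (d+1)^{d−1}) ), where m̄(G) = (m_0(G),…,m_{2d−2}(G)) ∈ ℝ^{2d−1} and ‖·‖ is the Euclidean norm. -/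
/-!
The moments `m_0, …, m_{2d-2}` of a signal fill the `d × d` Hankel matrix `H = (m_{i+j})`, which
factors as `Vᵀ · diag(a) · V` with `V` the (rectangular) Vandermonde matrix of the nodes. For the
regular signal `F` this gives `det H(F) = det V(x)² ∏ aⱼ`, and comparing the factors
`x_j - x_i ≥ η (j - i)` with those of the equispaced nodes `η i` bounds `det V(x)` below by
`η^{d(d-1)/2} ∏_{i<d} i!`. For a signal with fewer than `d` nodes the
factorisation has rank `< d`, so `det H(F̃) = 0`. The determinant is Lipschitz in the entries of
bounded matrices, and the entries of `H(F) - H(F̃)` are bounded by `‖m̄(F) - m̄(F̃)‖`; so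
`|det H(F)|` bounds that norm from below.
-/

open Finset Matrix
open scoped Nat

namespace Matrix

variable {R S : Type*} [CommRing R] [CommRing S] [LinearOrder S] [IsStrictOrderedRing S]
  {n : Type*} [Fintype n]

theorem det_le_of_row_le [Nontrivial R] [DecidableEq n] {A : Matrix n n R}
    {abv : AbsoluteValue R S} {c : n → S} (hc : ∀ i j, abv (A i j) ≤ c i) :
    abv A.det ≤ (Fintype.card n)! • ∏ i, c i :=
  calc
    abv A.det ≤ ∑ σ : Equiv.Perm n, abv (Equiv.Perm.sign σ • ∏ i, A (σ i) i) := by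
      rw [det_apply]; exact abv.sum_le _ _
    _ = ∑ σ : Equiv.Perm n, ∏ i, abv (A (σ i) i) :=
      sum_congr rfl fun σ _ => by rw [abv.map_units_int_smul, abv.map_prod]
    _ ≤ ∑ σ : Equiv.Perm n, ∏ i, c (σ i) := by gcongr; simp [hc]
    _ = (Fintype.card n)! • ∏ i, c i := by simp [Equiv.prod_comp, Fintype.card_perm]

theorem det_sub_det_le [Nontrivial R] [LinearOrder n] {A B : Matrix n n R}
    {abv : AbsoluteValue R S} {C ε : S} (hA : ∀ i j, abv (A i j) ≤ C)
    (hB : ∀ i j, abv (B i j) ≤ C) (hAB : ∀ i j, abv (A i j - B i j) ≤ ε) :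
    abv (A.det - B.det) ≤
      (Fintype.card n * (Fintype.card n)!) • (ε * C ^ (Fintype.card n - 1)) := by
  -- telescoping: replace the rows of `A` by those of `B` one at a time
  have htel : A.det - B.det =
      ∑ i, det (of fun j => if j < i then A j else if i = j then A j - B j else B j) := by
    have := (detRowAlternating (R := R) (n := n)).toMultilinearMap.map_sub_map_piecewise A B univ
    rw [piecewise_univ B A] at this
    simp only [mem_univ, true_imp_iff] at this
    exact this
  rw [htel, mul_nsmul', ← card_univ, ← sum_const]
  refine (abv.sum_le _ _).trans (sum_le_sum fun i _ => ?_)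
  have hrow := det_le_of_row_le (c := Function.update (fun _ => C) i ε) (abv := abv)
    (A := of fun j => if j < i then A j else if i = j then A j - B j else B j)
    (fun j k => by
      rcases lt_trichotomy j i with h | rfl | h
      · simp [h, h.ne, hA]
      · simp [hAB]
      · simp [h.ne, h.ne', h.not_gt, hB])
  simpa [prod_update_of_mem, card_univ_sdiff] using hrow

theorem vandermonde_const_mul (n : ℕ) (η : R) (v : Fin n → R) :
    vandermonde (fun i => η * v i) = vandermonde v * diagonal fun j : Fin n => η ^ (j : ℕ) := by
  ext i j
  simp [mul_pow, mul_comm]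

theorem pow_mul_superFactorial_le_det_vandermonde {n : ℕ} {x : Fin (n + 1) → ℝ} {η : ℝ}
    (hη : 0 ≤ η) (hgap : ∀ i j : Fin (n + 1), i < j → η * ((j : ℝ) - i) ≤ x j - x i) :
    η ^ (∑ j : Fin (n + 1), (j : ℕ)) * n.superFactorial ≤ (vandermonde x).det := by
  have hdet : (vandermonde fun i : Fin (n + 1) => η * ((i : ℕ) : ℝ)).det =
      η ^ (∑ j : Fin (n + 1), (j : ℕ)) * n.superFactorial := by
    rw [vandermonde_const_mul, det_mul, det_vandermonde_id_eq_superFactorial, det_diagonal,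
      prod_pow_eq_pow_sum, mul_comm]
  rw [← hdet, det_vandermonde, det_vandermonde]
  have hnonneg : ∀ i : Fin (n + 1), ∀ j ∈ Ioi i, 0 ≤ η * ((j : ℕ) : ℝ) - η * (i : ℕ) := by
    intro i j hj
    rw [← mul_sub]
    exact mul_nonneg hη (sub_nonneg.2 (by exact_mod_cast (mem_Ioi.1 hj).le))
  refine prod_le_prod (fun i _ => prod_nonneg (hnonneg i)) fun i _ =>
    prod_le_prod (hnonneg i) fun j hj => ?_
  rw [← mul_sub]
  exact hgap i j (mem_Ioi.1 hj)

end Matrix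

variable {ι R : Type*} [Fintype ι] [CommRing R]

def moment (a x : ι → R) (k : ℕ) : R := ∑ t, a t * x t ^ k

def momentHankel (d : ℕ) (a x : ι → R) : Matrix (Fin d) (Fin d) R :=
  of fun i j => moment a x (i + j)

theorem momentHankel_eq_rectVandermonde [DecidableEq ι] (d : ℕ) (a x : ι → R) :
    momentHankel d a x = (rectVandermonde x 1 d)ᵀ * diagonal a * rectVandermonde x 1 d := by
  ext i j
  rw [mul_apply]
  simp only [momentHankel, moment, of_apply, mul_diagonal, transpose_apply,
    rectVandermonde_apply, Pi.one_apply, one_pow, mul_one, pow_add]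
  exact sum_congr rfl fun t _ => by ring

theorem det_momentHankel_eq_zero_of_card_lt [DecidableEq ι] {K : Type*} [Field K] {d : ℕ}
    (a x : ι → K) (h : Fintype.card ι < d) : (momentHankel d a x).det = 0 := by
  by_contra hdet
  have hrank : (momentHankel d a x).rank ≤ Fintype.card ι := by
    rw [momentHankel_eq_rectVandermonde, Matrix.mul_assoc]
    exact (rank_mul_le_left _ _).trans (rank_le_card_width _)
  have := rank_of_isUnit _ ((isUnit_iff_isUnit_det _).2 (Ne.isUnit hdet))
  rw [Fintype.card_fin] at this
  omega

theorem det_momentHankel {d : ℕ} (a x : Fin d → R) :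
    (momentHankel d a x).det = (vandermonde x).det ^ 2 * ∏ i, a i := by
  have : rectVandermonde x 1 d = vandermonde x := by
    ext i j; simp [rectVandermonde_apply]
  rw [momentHankel_eq_rectVandermonde, this, det_mul, det_mul, det_transpose, det_diagonal]
  ring

theorem abs_moment_le {a x : ι → ℝ} (ha : ∀ t, |a t| ≤ 1) (hx : ∀ t, |x t| ≤ 1) (k : ℕ) :
    |moment a x k| ≤ Fintype.card ι :=
  calc |moment a x k| ≤ ∑ t, |a t * x t ^ k| := abs_sum_le_sum_abs _ _
    _ ≤ ∑ _t : ι, (1 : ℝ) := by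
      gcongr with t
      rw [abs_mul, abs_pow]
      exact mul_le_one₀ (ha t) (pow_nonneg (abs_nonneg _) _) (pow_le_one₀ (abs_nonneg _) (hx t))
    _ = Fintype.card ι := by simp

theorem mul_sub_le_sub_of_le_succ_sub {d : ℕ} {x : Fin d → ℝ} {η : ℝ}
    (hsep : ∀ (j : ℕ) (h : j + 1 < d), x ⟨j + 1, h⟩ - x ⟨j, Nat.lt_of_succ_lt h⟩ ≥ η)
    {i j : Fin d} (hij : i ≤ j) : η * ((j : ℝ) - i) ≤ x j - x i := by
  obtain ⟨j, hj⟩ := j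
  induction j with
  | zero =>
    obtain rfl : i = ⟨0, hj⟩ := Fin.ext (by simp [Fin.le_def] at hij; omega)
    simp
  | succ j ih =>
    rcases eq_or_lt_of_le hij with rfl | hlt
    · simp
    · have hi : i ≤ ⟨j, by omega⟩ := Fin.le_iff_val_le_val.2 (by simp [Fin.lt_def] at hlt; omega)
      have := ih (by omega) hi
      have := hsep j hj
      push_cast at *
      linarith

theorem abs_det_momentHankel_le {κ : Type*} [Fintype κ] {d : ℕ} {a x : ι → ℝ} {b y : κ → ℝ}
    {ε : ℝ} (hκ : Fintype.card κ < d) (ha : ∀ t, |a t| ≤ 1) (hx : ∀ t, |x t| ≤ 1)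
    (hε : ∀ k < 2 * d - 1, |moment a x k - moment b y k| ≤ ε) :
    |(momentHankel d a x).det| ≤ (d * d !) * (ε * (Fintype.card ι + ε) ^ (d - 1)) := by
  classical
  set A := momentHankel d a x
  set B := momentHankel d b y
  have hAB : ∀ i j, |A i j - B i j| ≤ ε := fun i j => hε _ (by omega)
  have hA : ∀ i j, |A i j| ≤ Fintype.card ι := fun i j => abs_moment_le ha hx _
  have hA' : ∀ i j, |A i j| ≤ Fintype.card ι + ε := fun i j =>
    (hA i j).trans (le_add_of_nonneg_right ((abs_nonneg _).trans (hAB i j)))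
  have hB : ∀ i j, |B i j| ≤ Fintype.card ι + ε := fun i j => by
    have := abs_sub_abs_le_abs_sub (B i j) (A i j)
    rw [abs_sub_comm] at this
    linarith [hA i j, hAB i j]
  have := det_sub_det_le (abv := AbsoluteValue.abs) hA' hB hAB
  simpa [B, det_momentHankel_eq_zero_of_card_lt b y hκ] using this

theorem le_abs_det_momentHankel {d : ℕ} {a x : Fin d → ℝ} {η γ : ℝ} (hη : 0 ≤ η)
    (hgap : ∀ i j : Fin d, i < j → η * ((j : ℝ) - i) ≤ x j - x i) (hγ : 0 ≤ γ)
    (hamp : ∀ t, γ ≤ |a t|) :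
    η ^ (d * (d - 1)) * γ ^ d * ∏ i ∈ Icc 1 (d - 1), (i ! : ℝ) ^ 2 ≤
      |(momentHankel d a x).det| := by
  obtain _ | n := d
  · simp
  have hsum : (∑ j : Fin (n + 1), (j : ℕ)) * 2 = (n + 1) * n := by
    rw [Fin.sum_univ_eq_sum_range (fun j => j), sum_range_id_mul_two, Nat.add_sub_cancel]
  have hsf : ∏ i ∈ Icc 1 n, (i ! : ℝ) ^ 2 = (n.superFactorial : ℝ) ^ 2 := by
    rw [prod_pow, ← Nat.prod_Icc_factorial, Nat.cast_prod]
  have hV := (pow_mul_superFactorial_le_det_vandermonde hη hgap).trans (le_abs_self _)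
  have hprod : γ ^ (n + 1) ≤ ∏ t, |a t| := by
    simpa using prod_le_prod (fun _ _ => hγ) fun t (_ : t ∈ univ) => hamp t
  calc η ^ ((n + 1) * (n + 1 - 1)) * γ ^ (n + 1) * ∏ i ∈ Icc 1 (n + 1 - 1), (i ! : ℝ) ^ 2
      = (η ^ (∑ j : Fin (n + 1), (j : ℕ)) * n.superFactorial) ^ 2 * γ ^ (n + 1) := by
        rw [Nat.add_sub_cancel, hsf, ← hsum, pow_mul]; ring
    _ ≤ |(vandermonde x).det| ^ 2 * ∏ t, |a t| := by gcongr
    _ = |(momentHankel (n + 1) a x).det| := by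
        rw [det_momentHankel, abs_mul, abs_pow, abs_prod]

theorem div_le_of_le_mul_factorial {d : ℕ} (hd : 1 ≤ d) {N S : ℝ} (hS0 : 0 ≤ S) (hS1 : S ≤ 1)
    (h : N ≤ (d * d !) * (S * (d + S) ^ (d - 1))) :
    N / (Real.sqrt (2 * d - 1) * (d : ℝ) ^ 2 * d ! * ((d : ℝ) + 1) ^ (d - 1)) ≤ S := by
  have hd' : (1 : ℝ) ≤ d := by exact_mod_cast hd
  have hsqrt : 1 ≤ Real.sqrt (2 * d - 1) := Real.one_le_sqrt.2 (by linarith)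
  have hK : 0 ≤ S * (d * d ! * ((d : ℝ) + 1) ^ (d - 1)) := by positivity
  rw [div_le_iff₀ (mul_pos (mul_pos (mul_pos (by linarith) (by positivity)) (by positivity))
    (by positivity))]
  calc N ≤ (d * d !) * (S * (d + 1) ^ (d - 1)) := h.trans (by gcongr)
    _ ≤ S * (Real.sqrt (2 * d - 1) * (d : ℝ) ^ 2 * d ! * ((d : ℝ) + 1) ^ (d - 1)) := by
      linarith [mul_le_mul_of_nonneg_left (one_le_mul_of_one_le_of_one_le hsqrt hd') hK]

theorem moment_difference_lower_bound_regular_general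
    (d : ℕ) (a x : Fin d → ℝ)
    (hrange : ∀ j, x j ∈ Set.Icc (-1 : ℝ) 1)
    (η : ℝ) (hη : 0 < η)
    (hsep : ∀ (j : ℕ) (h : j + 1 < d), x ⟨j + 1, h⟩ - x ⟨j, Nat.lt_of_succ_lt h⟩ ≥ η)
    (γ : ℝ) (hγ : 0 < γ)
    (hamp : ∀ j, γ ≤ |a j|) (hamp1 : ∀ j, |a j| ≤ 1)
    (l : ℕ) (hl : l < d)
    (r : ℕ) (hr : r ≤ l) (b y : Fin r → ℝ) :
    Real.sqrt (∑ k ∈ Finset.range (2 * d - 1),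
        ((∑ i, a i * x i ^ k) - (∑ j, b j * y j ^ k)) ^ 2) ≥
      min 1
        ((η ^ (d * (d - 1)) * γ ^ d * ∏ i ∈ Finset.Icc 1 (d - 1), (Nat.factorial i : ℝ) ^ 2) /
          (Real.sqrt (2 * d - 1) * (d : ℝ) ^ 2 * (Nat.factorial d : ℝ)
            * ((d : ℝ) + 1) ^ (d - 1))) := by
  set S := Real.sqrt (∑ k ∈ Finset.range (2 * d - 1),
    ((∑ i, a i * x i ^ k) - (∑ j, b j * y j ^ k)) ^ 2)
  -- below `1`, `S` bounds the entries of `H(F̃)` by `d + 1`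
  rcases le_or_gt 1 S with hS1 | hS1
  · exact (min_le_left _ _).trans hS1
  refine (min_le_right _ _).trans ?_
  have hdiff : ∀ k < 2 * d - 1, |moment a x k - moment b y k| ≤ S := fun k hk =>
    Real.abs_le_sqrt (single_le_sum (f := fun k => (moment a x k - moment b y k) ^ 2)
      (fun _ _ => sq_nonneg _) (mem_range.2 hk))
  have hupper := abs_det_momentHankel_le (by simpa using hr.trans_lt hl) hamp1
    (fun t => abs_le.2 (hrange t)) hdiff
  have hlower := le_abs_det_momentHankel hη.le
    (fun i j hij => mul_sub_le_sub_of_le_succ_sub hsep hij.le) hγ.le hamp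
  rw [Fintype.card_fin] at hupper
  exact div_le_of_le_mul_factorial (by omega) (Real.sqrt_nonneg _) hS1.le (hlower.trans hupper)

/-- STATEMENT 17: Let `F = (a, x)` be an `(η, γ)`-regular spike-train signal with
`d` nodes: `-1 ≤ x₁ < … < x_d ≤ 1` with consecutive gaps `≥ η`
(`0 < η ≤ 2/(d-1)`), and `γ ≤ |aⱼ| ≤ 1` (`0 < γ ≤ 1`). Then for every signal
`F̃` with at most `l < d` nodes,
`‖m̄(F) - m̄(F̃)‖ ≥ min(1, η^{d(d-1)} γ^d ∏_{i=1}^{d-1}(i!)² / (√(2d-1)·d²·d!·(d+1)^{d-1}))`,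
where `m̄(G) = (m₀(G), …, m_{2d-2}(G)) ∈ ℝ^{2d-1}`. -/
theorem moment_difference_lower_bound_regular
    (d : ℕ) (hd : 1 ≤ d) (a x : Fin d → ℝ)
    (ha : ∀ i, a i ≠ 0) (hmono : StrictMono x)
    (hrange : ∀ j, x j ∈ Set.Icc (-1 : ℝ) 1)
    (η : ℝ) (hη : 0 < η) (hη' : η ≤ 2 / ((d : ℝ) - 1))
    (hsep : ∀ (j : ℕ) (h : j + 1 < d), x ⟨j + 1, h⟩ - x ⟨j, Nat.lt_of_succ_lt h⟩ ≥ η)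
    (γ : ℝ) (hγ : 0 < γ) (hγ1 : γ ≤ 1)
    (hamp : ∀ j, γ ≤ |a j|) (hamp1 : ∀ j, |a j| ≤ 1)
    (l : ℕ) (hl : l < d)
    (r : ℕ) (hr : r ≤ l) (b y : Fin r → ℝ)
    (hb : ∀ i, b i ≠ 0) (hy : Function.Injective y) :
    Real.sqrt (∑ k ∈ Finset.range (2 * d - 1),
        ((∑ i, a i * x i ^ k) - (∑ j, b j * y j ^ k)) ^ 2) ≥
      min 1
        ((η ^ (d * (d - 1)) * γ ^ d * ∏ i ∈ Finset.Icc 1 (d - 1), (Nat.factorial i : ℝ) ^ 2) /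
          (Real.sqrt (2 * d - 1) * (d : ℝ) ^ 2 * (Nat.factorial d : ℝ)
            * ((d : ℝ) + 1) ^ (d - 1))) :=
  moment_difference_lower_bound_regular_general d a x hrange η hη hsep γ hγ hamp hamp1 l hl r hr b y
end
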